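/- arXiv:1509.04566 — 2 statements merged into one kernel-verified Lean document; each statement's English description precedes it below -/
import Mathlib

section
/- The discrete algebraic derivative estimator with K = 1 is exact on affine sequences up to a fixed multiplicative constant depending only on η: if y_j = a₀ + a₁·jh for all j, then -(3h/T³)[y_{k-η+1}T + y_{k+1}(T-2ηh) + Σ_{j=1}^{η-1} 2y_{k-η+j+1}(T-2jh)] = c(η)·a₁, where c(η) is a constant independent of a₀, a₁, k, and h, and c(η) → 1 as η → ∞. -/
lemma sumPQ (P Q R S : ℝ) (m : ℕ) :
    ∑ j ∈ Finset.Icc 1 m, (P + Q * j) * (R - S * j) =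
      P * R * m + (Q * R - P * S) * (m * (m + 1) / 2) - Q * S * (m * (m + 1) * (2 * m + 1) / 6) := by
  induction m with
  | zero => simp
  | succ n ih =>
      rw [Finset.sum_Icc_succ_top (by omega : 1 ≤ n + 1), ih]
      push_cast
      ring

/-- The discrete algebraic derivative estimator (gain `K = 1`) is exact on affine
sequences up to a multiplicative constant `c(η)` independent of `a₀, a₁, k, h`,
and `c(η) → 1` as `η → ∞`. -/
theorem stmt10 :
    ∃ c : ℕ → ℝ,
      (∀ η : ℕ, 1 ≤ η → ∀ h : ℝ, 0 < h → ∀ a₀ a₁ : ℝ, ∀ k : ℤ,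
        -(3 * h / ((η : ℝ) * h) ^ 3) *
            ((a₀ + a₁ * (((k : ℝ) - η + 1) * h)) * ((η : ℝ) * h) +
              (a₀ + a₁ * (((k : ℝ) + 1) * h)) * ((η : ℝ) * h - 2 * η * h) +
              ∑ j ∈ Finset.Icc 1 (η - 1),
                2 * (a₀ + a₁ * (((k : ℝ) - η + j + 1) * h)) * ((η : ℝ) * h - 2 * j * h)) =
          c η * a₁) ∧
      Filter.Tendsto c Filter.atTop (nhds 1) := by
  refine ⟨fun η => 1 + 2 / (η : ℝ) ^ 2, ?_, ?_⟩
  · intro η hη h hh a₀ a₁ k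
    have hsum : ∑ j ∈ Finset.Icc 1 (η - 1),
        2 * (a₀ + a₁ * (((k : ℝ) - η + j + 1) * h)) * ((η : ℝ) * h - 2 * j * h)
        = ∑ j ∈ Finset.Icc 1 (η - 1),
          ((2 * (a₀ + a₁ * (((k : ℝ) - η + 1) * h))) + (2 * a₁ * h) * j) *
            ((η : ℝ) * h - (2 * h) * j) := by
      apply Finset.sum_congr rfl
      intro j _
      ring
    rw [hsum, sumPQ]
    have hm : ((η - 1 : ℕ) : ℝ) = (η : ℝ) - 1 := by
      have : (1 : ℕ) ≤ η := hη
      push_cast [Nat.cast_sub this]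
      ring
    rw [hm]
    have hη0 : (η : ℝ) ≠ 0 := by positivity
    have hh0 : h ≠ 0 := ne_of_gt hh
    field_simp
    ring
  · have h1 : Filter.Tendsto (fun η : ℕ => 2 / (η : ℝ) ^ 2) Filter.atTop (nhds 0) := by
      apply Filter.Tendsto.div_atTop tendsto_const_nhds
      exact (Filter.tendsto_pow_atTop two_ne_zero).comp tendsto_natCast_atTop_atTop
    have := (tendsto_const_nhds : Filter.Tendsto (fun _ : ℕ => (1:ℝ)) Filter.atTop (nhds 1)).add h1
    simpa using this
end

section
/- First-order consistency of the continuous algebraic estimator: if y is twice continuously differentiable on a neighborhood of t with |y''| ≤ M there, then |(6/T³) ∫_{t-T}^{t} (2(τ-t) + T) y(τ) dτ - y'(t)| ≤ C·M·T for all sufficiently small T > 0, for some absolute constant C. -/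
/-! The estimator integrates `y` against a kernel whose zeroth moment vanishes and whose first
moment is `T³/6`, so it reproduces the slope of every affine function. Hence its error at `t`
is the estimator applied to the first-order Taylor remainder `y τ - (y t + y' t (τ - t))`,
which is at most `M (t - τ)² / 2`; since the kernel is bounded by `T` and
`∫ (t - τ)² = T³/3`, the error is at most `M T`. -/

open Set intervalIntegral

noncomputable def algebraicDerivEstimator (T : ℝ) (y : ℝ → ℝ) (t : ℝ) : ℝ :=
  (6 / T ^ 3) * ∫ τ in (t - T)..t, (2 * (τ - t) + T) * y τ

theorem algebraicDerivEstimator_affine {T : ℝ} (hT : T ≠ 0) (t a b : ℝ) :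
    algebraicDerivEstimator T (fun τ => a + b * (τ - t)) t = b := by
  have hpoly : ∀ u : ℝ, (2 * u + T) * (a + b * u) = 2 * b * u ^ 2 + (2 * a + T * b) * u + a * T :=
    fun u => by ring
  have hmoments : ∫ τ in (t - T)..t, (2 * (τ - t) + T) * (a + b * (τ - t)) = b * T ^ 3 / 6 := by
    rw [integral_comp_sub_right (fun u => (2 * u + T) * (a + b * u))]
    simp only [hpoly]
    rw [integral_add, integral_add, integral_const_mul, integral_const_mul, integral_pow,
      integral_id, integral_const, smul_eq_mul]
    · ring
    all_goals exact Continuous.intervalIntegrable (by fun_prop) _ _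
  rw [algebraicDerivEstimator, hmoments]
  field_simp

theorem algebraicDerivEstimator_sub {y z : ℝ → ℝ} {T t : ℝ}
    (hy : IntervalIntegrable y MeasureTheory.volume (t - T) t)
    (hz : IntervalIntegrable z MeasureTheory.volume (t - T) t) :
    algebraicDerivEstimator T (fun τ => y τ - z τ) t =
      algebraicDerivEstimator T y t - algebraicDerivEstimator T z t := by
  have hK : ContinuousOn (fun τ => 2 * (τ - t) + T) (uIcc (t - T) t) := by fun_prop
  simp only [algebraicDerivEstimator]
  rw [← mul_sub, ← integral_sub (hy.continuousOn_mul hK) (hz.continuousOn_mul hK)]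
  simp only [mul_sub]

theorem abs_algebraicDerivEstimator_le {r : ℝ → ℝ} {T t c : ℝ} (hT : 0 < T)
    (hr : ∀ τ ∈ Icc (t - T) t, |r τ| ≤ c * (t - τ) ^ 2) :
    |algebraicDerivEstimator T r t| ≤ 2 * c * T := by
  have hint : ‖∫ τ in (t - T)..t, (2 * (τ - t) + T) * r τ‖ ≤
      ∫ τ in (t - T)..t, T * (c * (t - τ) ^ 2) := by
    have hg : IntervalIntegrable (fun τ => T * (c * (t - τ) ^ 2)) MeasureTheory.volume (t - T) t :=
      Continuous.intervalIntegrable (by fun_prop) _ _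
    refine norm_integral_le_of_norm_le (by linarith) (Filter.Eventually.of_forall fun τ hτ => ?_) hg
    have hτ' := Ioc_subset_Icc_self hτ
    have hkernel : |2 * (τ - t) + T| ≤ T := abs_le.2 ⟨by linarith [hτ'.1], by linarith [hτ'.2]⟩
    rw [Real.norm_eq_abs, abs_mul]
    exact mul_le_mul hkernel (hr τ hτ') (abs_nonneg _) hT.le
  have hmoment : ∫ τ in (t - T)..t, T * (c * (t - τ) ^ 2) = T * (c * (T ^ 3 / 3)) := by
    rw [integral_const_mul, integral_const_mul, integral_comp_sub_left (fun u => u ^ 2)]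
    norm_num
  rw [algebraicDerivEstimator, abs_mul, abs_of_pos (by positivity), ← Real.norm_eq_abs]
  calc 6 / T ^ 3 * ‖∫ τ in (t - T)..t, (2 * (τ - t) + T) * r τ‖
      ≤ 6 / T ^ 3 * (T * (c * (T ^ 3 / 3))) := by
        rw [← hmoment]; gcongr
    _ = 2 * c * T := by field_simp; ring

theorem abs_sub_taylor_le_of_abs_deriv2_le {f f' f'' : ℝ → ℝ} {a b M : ℝ}
    (hf : ∀ x ∈ Icc a b, HasDerivAt f (f' x) x)
    (hf' : ∀ x ∈ Icc a b, HasDerivAt f' (f'' x) x)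
    (hM : ∀ x ∈ Icc a b, |f'' x| ≤ M) {x : ℝ} (hx : x ∈ Icc a b) :
    |f x - (f b + f' b * (x - b))| ≤ M / 2 * (b - x) ^ 2 := by
  have hsub : Icc x b ⊆ Icc a b := Icc_subset_Icc_left hx.1
  have hlip : ∀ s ∈ Icc x b, |f' s - f' b| ≤ M * (b - s) := fun s hs => by
    have := norm_image_sub_le_of_norm_deriv_le_segment' (f := f')
      (fun u hu => (hf' u (hsub (Icc_subset_Icc_left hs.1 hu))).hasDerivWithinAt)
      (fun u hu => hM u (hsub (Icc_subset_Icc_left hs.1 (Ico_subset_Icc_self hu)))) b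
      (right_mem_Icc.2 hs.2)
    rwa [Real.norm_eq_abs, abs_sub_comm] at this
  have hcont : ContinuousOn (fun s => f' s - f' b) (uIcc x b) := by
    rw [uIcc_of_le hx.2]
    exact ContinuousOn.sub (fun s hs => (hf' s (hsub hs)).continuousAt.continuousWithinAt)
      continuousOn_const
  have hftc : ∫ s in x..b, (f' s - f' b) = (f b - f' b * b) - (f x - f' b * x) := by
    refine integral_eq_sub_of_hasDerivAt (f := fun s => f s - f' b * s) (fun s hs => ?_)
      hcont.intervalIntegrable
    rw [uIcc_of_le hx.2] at hs
    simpa using (hf s (hsub hs)).fun_sub ((hasDerivAt_id' s).const_mul (f' b))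
  have hg : IntervalIntegrable (fun s => M * (b - s)) MeasureTheory.volume x b :=
    Continuous.intervalIntegrable (by fun_prop) _ _
  have hbound : ‖∫ s in x..b, (f' s - f' b)‖ ≤ ∫ s in x..b, M * (b - s) :=
    norm_integral_le_of_norm_le hx.2
      (Filter.Eventually.of_forall fun s hs => hlip s (Ioc_subset_Icc_self hs)) hg
  have hmoment : ∫ s in x..b, M * (b - s) = M / 2 * (b - x) ^ 2 := by
    rw [integral_const_mul, integral_comp_sub_left (fun u => u), integral_id]
    ring
  calc |f x - (f b + f' b * (x - b))| = |∫ s in x..b, (f' s - f' b)| := by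
        rw [hftc, ← abs_neg]; ring_nf
    _ = ‖∫ s in x..b, (f' s - f' b)‖ := (Real.norm_eq_abs _).symm
    _ ≤ M / 2 * (b - x) ^ 2 := hbound.trans hmoment.le

theorem abs_algebraicDerivEstimator_sub_deriv_le {y y' y'' : ℝ → ℝ} {t T M : ℝ} (hT : 0 < T)
    (hy : ∀ x ∈ Icc (t - T) t, HasDerivAt y (y' x) x)
    (hy' : ∀ x ∈ Icc (t - T) t, HasDerivAt y' (y'' x) x)
    (hM : ∀ x ∈ Icc (t - T) t, |y'' x| ≤ M) :
    |algebraicDerivEstimator T y t - y' t| ≤ M * T := by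
  have hy_int : IntervalIntegrable y MeasureTheory.volume (t - T) t := by
    refine ContinuousOn.intervalIntegrable ?_
    rw [uIcc_of_le (by linarith)]
    exact fun x hx => (hy x hx).continuousAt.continuousWithinAt
  have htaylor_int : IntervalIntegrable (fun τ => y t + y' t * (τ - t)) MeasureTheory.volume
      (t - T) t := Continuous.intervalIntegrable (by fun_prop) _ _
  calc |algebraicDerivEstimator T y t - y' t|
      = |algebraicDerivEstimator T (fun τ => y τ - (y t + y' t * (τ - t))) t| := by
        rw [algebraicDerivEstimator_sub hy_int htaylor_int, algebraicDerivEstimator_affine hT.ne']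
    _ ≤ 2 * (M / 2) * T :=
        abs_algebraicDerivEstimator_le hT fun τ => abs_sub_taylor_le_of_abs_deriv2_le hy hy' hM
    _ = M * T := by ring

theorem ContDiffOn.hasDerivAt_deriv {f : ℝ → ℝ} {s : Set ℝ} {n : WithTop ℕ∞}
    (hf : ContDiffOn ℝ n f s) (hn : n ≠ 0) (hs : IsOpen s) {x : ℝ} (hx : x ∈ s) :
    HasDerivAt f (deriv f x) x :=
  ((hf.contDiffAt (hs.mem_nhds hx)).differentiableAt hn).hasDerivAt

/-- First-order consistency of the continuous algebraic estimator: there is an absolute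
constant `C > 0` such that if `y` is twice continuously differentiable on a neighborhood
of `t` with `|y''| ≤ M` there, then for all sufficiently small `T > 0`,
`|(6/T³) ∫_{t-T}^{t} (2(τ-t) + T) y(τ) dτ - y'(t)| ≤ C M T`. -/
theorem stmt16 :
    ∃ C : ℝ, 0 < C ∧
      ∀ (y : ℝ → ℝ) (t M ε : ℝ), 0 < ε →
        ContDiffOn ℝ 2 y (Set.Ioo (t - ε) (t + ε)) →
        (∀ x ∈ Set.Ioo (t - ε) (t + ε),
          |iteratedDerivWithin 2 y (Set.Ioo (t - ε) (t + ε)) x| ≤ M) →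
        ∃ δ : ℝ, 0 < δ ∧ ∀ T : ℝ, 0 < T → T < δ →
          |(6 / T ^ 3) * (∫ τ in (t - T)..t, (2 * (τ - t) + T) * y τ) - deriv y t| ≤
            C * M * T := by
  refine ⟨1, one_pos, fun y t M ε hε hy hM => ⟨ε, hε, fun T hT hTε => ?_⟩⟩
  have hs : IsOpen (Ioo (t - ε) (t + ε)) := isOpen_Ioo
  have hwindow : Icc (t - T) t ⊆ Ioo (t - ε) (t + ε) := Icc_subset_Ioo (by linarith) (by linarith)
  have hy' := hy.deriv_of_isOpen hs (by norm_num : (1 : WithTop ℕ∞) + 1 ≤ 2)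
  rw [one_mul]
  refine abs_algebraicDerivEstimator_sub_deriv_le hT
    (fun x hx => hy.hasDerivAt_deriv two_ne_zero hs (hwindow hx))
    (fun x hx => hy'.hasDerivAt_deriv one_ne_zero hs (hwindow hx)) fun x hx => ?_
  simpa [iteratedDerivWithin_of_isOpen_eq_iterate hs (hwindow hx)] using hM x (hwindow hx)
end
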